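/- arXiv:2204.00744 — 2 statements merged into one kernel-verified Lean document; each statement's English description precedes it below -/
import Mathlib

section
/- Let κ ∈ ℂ and let ψ : ℝ → ℂ be differentiable such that for every t ∈ ℝ, ψ(t) ≠ 0 and ψ(t) + κ lies in the slit plane (i.e., ψ(t) + κ is not a nonpositive real number). Define the alternative infinitesimal generator α(t) = Log(ψ(t) + κ), so that exp(α(t)) = ψ(t) + κ. Then for every t ∈ ℝ, 1 − κ · exp(−α(t)) ≠ 0 and the generalized logarithmic representation ψ'(t)/ψ(t) = (1 − κ · exp(−α(t)))⁻¹ · α'(t) holds. -/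
/-! Since `exp α = ψ + κ`, the factor `1 - κ e^{-α}` equals `ψ / (ψ + κ)`, while the chain rule gives
`α' = ψ' / (ψ + κ)`; dividing the second by the first leaves `ψ' / ψ`. -/

open Complex

lemma one_sub_mul_exp_neg_log_add {z κ : ℂ} (h : z + κ ≠ 0) :
    1 - κ * exp (-log (z + κ)) = z / (z + κ) := by
  rw [exp_neg, exp_log h]
  field_simp
  ring

lemma hasDerivAt_log_add_const {ψ : ℝ → ℂ} {κ : ℂ} {t : ℝ} (hψ : DifferentiableAt ℝ ψ t)
    (hslit : ψ t + κ ∈ slitPlane) :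
    HasDerivAt (fun s => log (ψ s + κ)) (deriv ψ t / (ψ t + κ)) t :=
  (hψ.hasDerivAt.add_const κ).clog_real hslit

/-- Scalar generalized logarithmic representation: with `α = Log(ψ + κ)`,
`ψ'/ψ = (1 − κ e^{−α})⁻¹ α'`. -/
theorem stmt_8 (κ : ℂ) (ψ : ℝ → ℂ) (hψ : Differentiable ℝ ψ)
    (hne : ∀ t : ℝ, ψ t ≠ 0)
    (hslit : ∀ t : ℝ, ψ t + κ ∈ Complex.slitPlane)
    (α : ℝ → ℂ) (hα : ∀ t : ℝ, α t = Complex.log (ψ t + κ)) :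
    ∀ t : ℝ, (1 - κ * Complex.exp (-α t)) ≠ 0 ∧
      deriv ψ t / ψ t = (1 - κ * Complex.exp (-α t))⁻¹ * deriv α t := by
  intro t
  obtain rfl : α = fun s => log (ψ s + κ) := funext hα
  have hz : ψ t + κ ≠ 0 := slitPlane_ne_zero (hslit t)
  have hfactor := one_sub_mul_exp_neg_log_add hz
  refine ⟨hfactor ▸ div_ne_zero (hne t) hz, ?_⟩
  rw [hfactor, (hasDerivAt_log_add_const (hψ t) (hslit t)).deriv]
  field_simp [hne t]
end

section
/- Let κ ∈ ℂ, n ≥ 1 an integer, and let ψ : ℝ → ℂ be n-times differentiable such that for every 1 ≤ k ≤ n and every t ∈ ℝ, ∂^{k−1}ψ(t) ≠ 0 and ∂^{k−1}ψ(t) + κ lies in the slit plane (i.e., it is not a nonpositive real number). Then the n-th order generator is the product of logarithmic representations: ψ(t)⁻¹ · ∂ⁿψ(t) = ∏_{k=1}^{n} (1 + κ · (∂^{k−1}ψ(t))⁻¹) · (d/dt)[Log(∂^{k−1}ψ(t) + κ)] for all t ∈ ℝ. -/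
/-! Each factor equals `∂ᵏψ / ∂ᵏ⁻¹ψ`, because `(1 + κ/u) · (u' / (u + κ)) = u' / u`; the product over
`k = 1, …, n` then telescopes to `∂ⁿψ / ψ`. -/

open Finset

theorem HasDerivAt.one_add_mul_inv_mul_deriv_clog_add_const {f : ℝ → ℂ} {f' : ℂ} {t : ℝ}
    (κ : ℂ) (hf : HasDerivAt f f' t) (h0 : f t ≠ 0) (hslit : f t + κ ∈ Complex.slitPlane) :
    (1 + κ * (f t)⁻¹) * _root_.deriv (fun s => Complex.log (f s + κ)) t = f' / f t := by
  rw [((hf.add_const κ).clog_real hslit).deriv]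
  have hκ : f t + κ ≠ 0 := Complex.slitPlane_ne_zero hslit
  field_simp

theorem Finset.prod_Icc_one_div_mul_eq {K : Type*} [Field K] (g : ℕ → K) {m : ℕ}
    (hg : ∀ k < m, g k ≠ 0) : (∏ k ∈ Icc 1 m, g k / g (k - 1)) * g 0 = g m := by
  induction m with
  | zero => simp
  | succ m ih =>
    rw [prod_Icc_succ_top (Nat.le_add_left 1 m), Nat.add_sub_cancel, mul_right_comm,
      ih fun k hk => hg k (Nat.lt_succ_of_lt hk), mul_div_cancel₀ _ (hg m m.lt_succ_self)]

/-- Scalar form of Theorem 2: the n-th order generator is a product of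
logarithmic representations. -/
theorem stmt_9 (κ : ℂ) (n : ℕ) (hn : 1 ≤ n)
    (ψ : ℝ → ℂ) (hψ : ∀ j : ℕ, j < n → Differentiable ℝ (iteratedDeriv j ψ))
    (hne : ∀ k : ℕ, 1 ≤ k → k ≤ n → ∀ t : ℝ, iteratedDeriv (k - 1) ψ t ≠ 0)
    (hslit : ∀ k : ℕ, 1 ≤ k → k ≤ n → ∀ t : ℝ,
      iteratedDeriv (k - 1) ψ t + κ ∈ Complex.slitPlane) :
    ∀ t : ℝ, (ψ t)⁻¹ * iteratedDeriv n ψ t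
      = ∏ k ∈ Finset.Icc 1 n,
          (1 + κ * (iteratedDeriv (k - 1) ψ t)⁻¹) *
            deriv (fun s => Complex.log (iteratedDeriv (k - 1) ψ s + κ)) t := by
  intro t
  have hiter_ne : ∀ j < n, iteratedDeriv j ψ t ≠ 0 := fun j hj => by
    simpa using hne (j + 1) (Nat.le_add_left 1 j) hj t
  have hfactor : ∀ k ∈ Icc 1 n, (1 + κ * (iteratedDeriv (k - 1) ψ t)⁻¹) *
      deriv (fun s => Complex.log (iteratedDeriv (k - 1) ψ s + κ)) t
        = iteratedDeriv k ψ t / iteratedDeriv (k - 1) ψ t := by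
    intro k hk
    obtain ⟨hk1, hkn⟩ := mem_Icc.mp hk
    obtain ⟨j, rfl⟩ := Nat.exists_eq_add_of_le' hk1
    have hder : HasDerivAt (iteratedDeriv j ψ) (iteratedDeriv (j + 1) ψ t) t := by
      rw [iteratedDeriv_succ]
      exact (hψ j hkn t).hasDerivAt
    simpa using hder.one_add_mul_inv_mul_deriv_clog_add_const κ (hiter_ne j hkn)
      (by simpa using hslit (j + 1) hk1 hkn t)
  rw [prod_congr rfl hfactor, ← prod_Icc_one_div_mul_eq (fun k => iteratedDeriv k ψ t) hiter_ne,
    iteratedDeriv_zero, mul_comm _ (ψ t), inv_mul_cancel_left₀ (by simpa using hiter_ne 0 hn)]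
end
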